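/- arXiv:2412.08415 — 2 statements merged into one kernel-verified Lean document; each statement's English description precedes it below -/
import Mathlib

section
/- Fix c > 0 and q₀,q₁ ∈ ℝ² with q₀ ≠ q₁ and |q₀|·|q₁| ≤ 2c. Then there is exactly one pair (v,η) with η > 0 such that v is a chord of H₀ at energy c from q₀ to q₁ with parameter η, and exactly one such pair with η < 0. -/
open Set

abbrev R2 : Type := ℝ × ℝ
abbrev Phase : Type := R2 × R2

noncomputable section

def sq2 (a : R2) : ℝ := a.1 ^ 2 + a.2 ^ 2

/-- Euclidean norm on `ℝ²`. -/
def enorm2 (a : R2) : ℝ := Real.sqrt (sq2 a)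

/-- Euclidean inner product on `ℝ²`. -/
def inner2 (a b : R2) : ℝ := a.1 * b.1 + a.2 * b.2

/-- The Copernican Hamiltonian `H₀(q,p) = (p₁² + p₂²)/2 + p₁q₂ − p₂q₁`. -/
def H0 (x : Phase) : ℝ :=
  (x.2.1 ^ 2 + x.2.2 ^ 2) / 2 + x.2.1 * x.1.2 - x.2.2 * x.1.1

/-- The Hamiltonian vector field `X_H = (∂H/∂p₁, ∂H/∂p₂, −∂H/∂q₁, −∂H/∂q₂)`. -/
def XH (H : Phase → ℝ) (x : Phase) : Phase :=
  ((fderiv ℝ H x ((0, 0), (1, 0)), fderiv ℝ H x ((0, 0), (0, 1))),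
   (-fderiv ℝ H x ((1, 0), (0, 0)), -fderiv ℝ H x ((0, 1), (0, 0))))

/-- `v` is a chord of `H` at energy `e` from `q0` to `q1` with parameter `η`. -/
def IsChord (H : Phase → ℝ) (e : ℝ) (q0 q1 : R2) (η : ℝ) (v : ℝ → Phase) : Prop :=
  (v 0).1 = q0 ∧ (v 1).1 = q1 ∧
  (∀ t ∈ Icc (0:ℝ) 1, HasDerivWithinAt v (η • XH H (v t)) (Icc (0:ℝ) 1) t) ∧
  ∀ t ∈ Icc (0:ℝ) 1, H (v t) = e

/-- The rotation matrix `R(t) = [[cos t, sin t], [−sin t, cos t]]` acting on `ℝ²`. -/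
def rot (t : ℝ) (a : R2) : R2 :=
  (Real.cos t * a.1 + Real.sin t * a.2, -Real.sin t * a.1 + Real.cos t * a.2)

/-- `f_{c,q₀,q₁}(η) = −cη² + η⟨q₁, R(η+π/2)q₀⟩ + (|q₀|²+|q₁|²)/2 − ⟨q₁, R(η)q₀⟩`. -/
def ff (c : ℝ) (q0 q1 : R2) (η : ℝ) : ℝ :=
  -c * η ^ 2 + η * inner2 q1 (rot (η + Real.pi / 2) q0) +
    (sq2 q0 + sq2 q1) / 2 - inner2 q1 (rot η q0)

end

noncomputable section Aux

/-! ### The vector field as a continuous linear map -/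

def pi1 : Phase →L[ℝ] ℝ := (ContinuousLinearMap.fst ℝ ℝ ℝ).comp (ContinuousLinearMap.fst ℝ R2 R2)
def pi2 : Phase →L[ℝ] ℝ := (ContinuousLinearMap.snd ℝ ℝ ℝ).comp (ContinuousLinearMap.fst ℝ R2 R2)
def pi3 : Phase →L[ℝ] ℝ := (ContinuousLinearMap.fst ℝ ℝ ℝ).comp (ContinuousLinearMap.snd ℝ R2 R2)
def pi4 : Phase →L[ℝ] ℝ := (ContinuousLinearMap.snd ℝ ℝ ℝ).comp (ContinuousLinearMap.snd ℝ R2 R2)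

def Fclm : Phase →L[ℝ] Phase := ((pi3 + pi2).prod (pi4 - pi1)).prod (pi4.prod (-pi3))

lemma Fclm_apply (x : Phase) : Fclm x = ((x.2.1 + x.1.2, x.2.2 - x.1.1), (x.2.2, -x.2.1)) := by
  simp [Fclm, pi1, pi2, pi3, pi4]

lemma hasFDerivAt_H0 (x : Phase) :
    HasFDerivAt H0 ((2:ℝ)⁻¹ • (x.2.1 • pi3 + x.2.1 • pi3 + (x.2.2 • pi4 + x.2.2 • pi4))
      + (x.2.1 • pi2 + x.1.2 • pi3) - (x.2.2 • pi1 + x.1.1 • pi4)) x := by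
  have h1 : HasFDerivAt (fun x : Phase => x.1.1) pi1 x := pi1.hasFDerivAt
  have h2 : HasFDerivAt (fun x : Phase => x.1.2) pi2 x := pi2.hasFDerivAt
  have h3 : HasFDerivAt (fun x : Phase => x.2.1) pi3 x := pi3.hasFDerivAt
  have h4 : HasFDerivAt (fun x : Phase => x.2.2) pi4 x := pi4.hasFDerivAt
  have := ((((h3.mul h3).add (h4.mul h4)).const_mul ((2:ℝ)⁻¹)).add (h3.mul h2)).sub (h4.mul h1)
  refine this.congr_of_eventuallyEq (Filter.Eventually.of_forall fun y => ?_)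
  simp [H0]; ring

lemma XH_H0 (x : Phase) : XH H0 x = Fclm x := by
  rw [Fclm_apply]
  have h := (hasFDerivAt_H0 x).fderiv
  simp only [XH, h]
  simp [pi1, pi2, pi3, pi4]
  exact ⟨by ring, by ring⟩

/-! ### The explicit solution -/

def sol (η : ℝ) (q0 p0 : R2) (t : ℝ) : Phase :=
  (rot (η * t) (q0 + (η * t) • p0), rot (η * t) p0)

lemma rot_rot (a b : ℝ) (x : R2) : rot a (rot b x) = rot (a + b) x := by
  simp [rot, Real.cos_add, Real.sin_add]; constructor <;> ring

lemma rot_zero (x : R2) : rot 0 x = x := by simp [rot]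

lemma H0_sol (η : ℝ) (q0 p0 : R2) (t : ℝ) : H0 (sol η q0 p0 t) = H0 (q0, p0) := by
  simp only [H0, sol, rot, Prod.smul_fst, Prod.smul_snd, Prod.fst_add, Prod.snd_add, smul_eq_mul]
  linear_combination ((p0.1^2 + p0.2^2)/2 + p0.1*q0.2 - p0.2*q0.1) * Real.sin_sq_add_cos_sq (η*t)

lemma sol_zero (η : ℝ) (q0 p0 : R2) : sol η q0 p0 0 = (q0, p0) := by
  simp [sol, rot_zero]

/-- the initial momentum determined by the endpoint condition -/
def P (η : ℝ) (q0 q1 : R2) : R2 := η⁻¹ • (rot (-η) q1 - q0)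

lemma sol_one (η : ℝ) (hη : η ≠ 0) (q0 q1 : R2) :
    (sol η q0 (P η q0 q1) 1).1 = q1 := by
  have : q0 + (η * 1) • P η q0 q1 = rot (-η) q1 := by
    simp [P, smul_smul, mul_inv_cancel₀ hη]
  simp only [sol, this, rot_rot]
  simp [rot_zero]

lemma ff_eq_energy (c : ℝ) (q0 q1 : R2) (η : ℝ) (hη : η ≠ 0) :
    ff c q0 q1 η = η^2 * (H0 (q0, P η q0 q1) - c) := by
  simp only [ff, H0, P, rot, inner2, sq2, Prod.smul_fst, Prod.smul_snd, Prod.fst_sub,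
    Prod.snd_sub, smul_eq_mul, Real.cos_add, Real.sin_add, Real.cos_pi_div_two,
    Real.sin_pi_div_two, Real.cos_neg, Real.sin_neg]
  field_simp
  ring_nf
  linear_combination (-(q1.1^2 + q1.2^2)) * Real.sin_sq_add_cos_sq η

lemma sol_eq (η : ℝ) (q0 p0 : R2) : sol η q0 p0 = fun t =>
    ((Real.cos (η*t) * (q0.1 + (η*t) * p0.1) + Real.sin (η*t) * (q0.2 + (η*t) * p0.2),
      -Real.sin (η*t) * (q0.1 + (η*t) * p0.1) + Real.cos (η*t) * (q0.2 + (η*t) * p0.2)),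
     (Real.cos (η*t) * p0.1 + Real.sin (η*t) * p0.2,
      -Real.sin (η*t) * p0.1 + Real.cos (η*t) * p0.2)) := by
  funext s; simp [sol, rot]

lemma hasDerivAt_sol (η : ℝ) (q0 p0 : R2) (t : ℝ) :
    HasDerivAt (sol η q0 p0) (η • Fclm (sol η q0 p0 t)) t := by
  have hθ : HasDerivAt (fun t : ℝ => η * t) η t := by
    simpa using (hasDerivAt_id t).const_mul η
  have hcos : HasDerivAt (fun t : ℝ => Real.cos (η*t)) (-Real.sin (η*t) * η) t :=
    (Real.hasDerivAt_cos (η*t)).comp t hθ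
  have hsin : HasDerivAt (fun t : ℝ => Real.sin (η*t)) (Real.cos (η*t) * η) t :=
    (Real.hasDerivAt_sin (η*t)).comp t hθ
  have hq1 : HasDerivAt (fun t : ℝ => q0.1 + (η*t) * p0.1) (η * p0.1) t := by
    exact ((hasDerivAt_const t q0.1).add (hθ.mul_const p0.1)).congr_deriv (zero_add _)
  have hq2 : HasDerivAt (fun t : ℝ => q0.2 + (η*t) * p0.2) (η * p0.2) t := by
    exact ((hasDerivAt_const t q0.2).add (hθ.mul_const p0.2)).congr_deriv (zero_add _)
  have hA := (hcos.mul hq1).add (hsin.mul hq2)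
  have hB := (hsin.neg.mul hq1).add (hcos.mul hq2)
  have hC := (hcos.mul_const p0.1).add (hsin.mul_const p0.2)
  have hD := (hsin.neg.mul_const p0.1).add (hcos.mul_const p0.2)
  have hBB : HasDerivAt (fun t : ℝ => -Real.sin (η*t) * (q0.1 + (η*t) * p0.1)
      + Real.cos (η*t) * (q0.2 + (η*t) * p0.2))
      (-(Real.cos (η*t) * η) * (q0.1 + (η*t)*p0.1) + -Real.sin (η*t) * (η * p0.1)
        + ((-Real.sin (η*t) * η) * (q0.2 + (η*t)*p0.2) + Real.cos (η*t) * (η * p0.2))) t := hB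
  have hall := (hA.prodMk hBB).prodMk (hC.prodMk hD)
  rw [sol_eq]
  refine hall.congr_deriv ?_
  simp only [sol, rot, Fclm_apply, Prod.smul_mk, Prod.mk.injEq, smul_eq_mul,
    Prod.fst_add, Prod.snd_add, Prod.smul_fst, Prod.smul_snd]
  refine ⟨⟨by ring, by ring⟩, by ring, by ring⟩

/-! ### Analysis of `ff` -/

lemma ff_formula (c : ℝ) (q0 q1 : R2) (η : ℝ) :
    ff c q0 q1 η = -c * η^2
      + η * ((q1.1*q0.2 - q1.2*q0.1) * Real.cos η - (q1.1*q0.1 + q1.2*q0.2) * Real.sin η)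
      + (sq2 q0 + sq2 q1)/2
      - ((q1.1*q0.1 + q1.2*q0.2) * Real.cos η + (q1.1*q0.2 - q1.2*q0.1) * Real.sin η) := by
  simp [ff, inner2, rot, Real.cos_add, Real.sin_add]; ring

lemma hasDerivAt_ff (c : ℝ) (q0 q1 : R2) (η : ℝ) :
    HasDerivAt (ff c q0 q1) (-(η * (2*c + inner2 q1 (rot η q0)))) η := by
  set A := q1.1*q0.1 + q1.2*q0.2 with hA
  set B := q1.1*q0.2 - q1.2*q0.1 with hB
  have h := ((((hasDerivAt_pow 2 η).const_mul (-c)).add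
      ((hasDerivAt_id η).mul (((Real.hasDerivAt_cos η).const_mul B).sub
        ((Real.hasDerivAt_sin η).const_mul A)))).add (hasDerivAt_const η ((sq2 q0 + sq2 q1)/2))).sub
      (((Real.hasDerivAt_cos η).const_mul A).add ((Real.hasDerivAt_sin η).const_mul B))
  have heq : (fun η => ff c q0 q1 η) = _ := funext (fun η => ff_formula c q0 q1 η)
  rw [show (ff c q0 q1) = _ from heq]
  refine h.congr_deriv ?_
  simp [inner2, rot, hA, hB]; ring

lemma inner2_rot_le (q0 q1 : R2) (θ : ℝ) : |inner2 q1 (rot θ q0)| ≤ enorm2 q0 * enorm2 q1 := by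
  have h0 : enorm2 q0 * enorm2 q1 = Real.sqrt (sq2 q0 * sq2 q1) := by
    rw [enorm2, enorm2, ← Real.sqrt_mul]
    simp [sq2]; positivity
  rw [h0]
  apply Real.abs_le_sqrt
  simp only [inner2, rot, sq2]
  nlinarith [sq_nonneg ((q1.1*q0.2 - q1.2*q0.1) * Real.cos θ - (q1.1*q0.1 + q1.2*q0.2) * Real.sin θ),
    Real.sin_sq_add_cos_sq θ, sq_nonneg (Real.sin θ), sq_nonneg (Real.cos θ)]

lemma continuous_ff (c : ℝ) (q0 q1 : R2) : Continuous (ff c q0 q1) :=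
  continuous_iff_continuousAt.mpr fun x => (hasDerivAt_ff c q0 q1 x).continuousAt

lemma two_c_add_nonneg {c : ℝ} (q0 q1 : R2) (hle : enorm2 q0 * enorm2 q1 ≤ 2 * c) (θ : ℝ) :
    0 ≤ 2*c + inner2 q1 (rot θ q0) := by
  have := (abs_le.mp (inner2_rot_le q0 q1 θ)).1
  linarith

lemma ff_antitone {c : ℝ} (q0 q1 : R2) (hle : enorm2 q0 * enorm2 q1 ≤ 2 * c) :
    AntitoneOn (ff c q0 q1) (Ici 0) := by
  apply antitoneOn_of_deriv_nonpos (convex_Ici 0) (continuous_ff c q0 q1).continuousOn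
  · exact fun x _ => (hasDerivAt_ff c q0 q1 x).differentiableAt.differentiableWithinAt
  · intro x hx
    rw [interior_Ici] at hx
    rw [(hasDerivAt_ff c q0 q1 x).deriv]
    have := two_c_add_nonneg q0 q1 hle x
    have hx0 : 0 < x := hx
    nlinarith

lemma ff_root_unique {c : ℝ} (hc : 0 < c) (q0 q1 : R2)
    (hle : enorm2 q0 * enorm2 q1 ≤ 2 * c) {a b : ℝ}
    (ha : 0 < a) (hb : 0 < b) (hfa : ff c q0 q1 a = 0) (hfb : ff c q0 q1 b = 0) : a = b := by
  have key : ∀ a b : ℝ, 0 < a → a < b → ff c q0 q1 a = 0 → ff c q0 q1 b = 0 → False := by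
    intro a b ha hab hfa hfb
    have hzero : ∀ x ∈ Icc a b, ff c q0 q1 x = 0 := by
      intro x hx
      have h1 : ff c q0 q1 x ≤ 0 := hfa ▸ ff_antitone q0 q1 hle (le_of_lt ha)
        (show x ∈ Ici 0 from le_trans ha.le hx.1) hx.1
      have h2 : 0 ≤ ff c q0 q1 x := hfb ▸ ff_antitone q0 q1 hle
        (show x ∈ Ici 0 from le_trans ha.le hx.1) (le_trans ha.le (hx.1.trans hx.2)) hx.2
      linarith
    set A := q1.1*q0.1 + q1.2*q0.2 with hA
    set B := q1.1*q0.2 - q1.2*q0.1 with hB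
    have hg : ∀ x ∈ Ioo a b, A * Real.cos x + B * Real.sin x = -(2*c) := by
      intro x hx
      have hev : ff c q0 q1 =ᶠ[nhds x] fun _ => 0 :=
        Filter.eventuallyEq_of_mem (Ioo_mem_nhds hx.1 hx.2)
          (fun y hy => hzero y (Ioo_subset_Icc_self hy))
      have hd : deriv (ff c q0 q1) x = 0 := by rw [hev.deriv_eq]; simp
      rw [(hasDerivAt_ff c q0 q1 x).deriv] at hd
      have hx0 : 0 < x := lt_trans ha hx.1
      have : 2*c + inner2 q1 (rot x q0) = 0 := by
        rcases mul_eq_zero.mp (neg_eq_zero.mp hd) with h | h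
        · exact absurd h hx0.ne'
        · exact h
      have hrot : inner2 q1 (rot x q0) = A * Real.cos x + B * Real.sin x := by
        simp [inner2, rot, hA, hB]; ring
      linarith [hrot ▸ this]
    have hψ : ∀ x ∈ Ioo a b, B * Real.cos x - A * Real.sin x = 0 := by
      intro x hx
      have hev : (fun x => A * Real.cos x + B * Real.sin x) =ᶠ[nhds x] fun _ => -(2*c) :=
        Filter.eventuallyEq_of_mem (Ioo_mem_nhds hx.1 hx.2) (fun y hy => hg y hy)
      have hd : deriv (fun x => A * Real.cos x + B * Real.sin x) x = 0 := by
        rw [hev.deriv_eq]; simp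
      have hD : HasDerivAt (fun x => A * Real.cos x + B * Real.sin x)
          (B * Real.cos x - A * Real.sin x) x := by
        have := ((Real.hasDerivAt_cos x).const_mul A).add ((Real.hasDerivAt_sin x).const_mul B)
        exact this.congr_deriv (by ring)
      rw [hD.deriv] at hd; exact hd
    set x0 := (a+b)/2 with hx0
    have hmem : x0 ∈ Ioo a b := ⟨by simp [hx0]; linarith, by simp [hx0]; linarith⟩
    have hev : (fun x => B * Real.cos x - A * Real.sin x) =ᶠ[nhds x0] fun _ => 0 :=
      Filter.eventuallyEq_of_mem (Ioo_mem_nhds hmem.1 hmem.2) (fun y hy => hψ y hy)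
    have hd : deriv (fun x => B * Real.cos x - A * Real.sin x) x0 = 0 := by
      rw [hev.deriv_eq]; simp
    have hD : HasDerivAt (fun x => B * Real.cos x - A * Real.sin x)
        (-(A * Real.cos x0 + B * Real.sin x0)) x0 := by
      have := ((Real.hasDerivAt_cos x0).const_mul B).sub ((Real.hasDerivAt_sin x0).const_mul A)
      exact this.congr_deriv (by ring)
    rw [hD.deriv] at hd
    have := hg x0 hmem
    rw [this] at hd
    linarith
  rcases lt_trichotomy a b with h | h | h
  · exact absurd (key a b ha h hfa hfb) not_false
  · exact h
  · exact absurd (key b a hb h hfb hfa) not_false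

lemma ff_exists_root {c : ℝ} (hc : 0 < c) (q0 q1 : R2) (hq : q0 ≠ q1)
    (hle : enorm2 q0 * enorm2 q1 ≤ 2 * c) : ∃ η, 0 < η ∧ ff c q0 q1 η = 0 := by
  have hff0 : 0 < ff c q0 q1 0 := by
    rw [ff_formula]
    have hne : q0.1 - q1.1 ≠ 0 ∨ q0.2 - q1.2 ≠ 0 := by
      by_contra h
      push_neg at h
      exact hq (Prod.ext (by linarith [h.1, sub_eq_zero.mp h.1]) (by linarith [sub_eq_zero.mp h.2]))
    simp only [sq2, Real.cos_zero, Real.sin_zero]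
    rcases hne with h | h
    · nlinarith [sq_nonneg (q0.1 - q1.1), sq_nonneg (q0.2 - q1.2), sq_pos_of_ne_zero h]
    · nlinarith [sq_nonneg (q0.1 - q1.1), sq_nonneg (q0.2 - q1.2), sq_pos_of_ne_zero h]
  set M := (sq2 q0 + sq2 q1)/2 with hM
  have hM0 : 0 ≤ M := by simp only [hM, sq2]; positivity
  set K := (M + 2*c)/c with hK
  have hKc : c * K = M + 2*c := by rw [hK]; field_simp
  have hK0 : 0 ≤ K := div_nonneg (by linarith) hc.le
  set T := K + 3 with hT
  have hT0 : (0:ℝ) < T := by simp [hT]; linarith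
  have hffT : ff c q0 q1 T < 0 := by
    have h2 := (abs_le.mp (inner2_rot_le q0 q1 (T + Real.pi/2))).2
    have h4 := (abs_le.mp (inner2_rot_le q0 q1 T)).1
    have hb : ff c q0 q1 T ≤ -c * T^2 + T * (2*c) + M + 2*c := by
      simp only [ff, ← hM]
      have := mul_le_mul_of_nonneg_left (h2.trans hle) hT0.le
      nlinarith
    have hT2 : T^2 = K^2 + 6*K + 9 := by rw [hT]; ring
    nlinarith [hT2, hKc, mul_nonneg hc.le (sq_nonneg K), mul_nonneg hc.le hK0, hc]
  have := intermediate_value_Ioo' hT0.le (continuous_ff c q0 q1).continuousOn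
  obtain ⟨η, hη, hfη⟩ := this (show (0:ℝ) ∈ Ioo (ff c q0 q1 T) (ff c q0 q1 0) from ⟨hffT, hff0⟩)
  exact ⟨η, hη.1, hfη⟩

/-! ### Chords -/

lemma isChord_sol {c η : ℝ} (hη : η ≠ 0) (q0 q1 : R2) (hroot : ff c q0 q1 η = 0) :
    IsChord H0 c q0 q1 η (sol η q0 (P η q0 q1)) := by
  have hen : H0 (q0, P η q0 q1) = c := by
    have h := ff_eq_energy c q0 q1 η hη
    rw [hroot] at h
    have hη2 : (η:ℝ)^2 ≠ 0 := pow_ne_zero 2 hη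
    have := (mul_eq_zero.mp h.symm).resolve_left hη2
    linarith
  refine ⟨by simp [sol_zero], sol_one η hη q0 q1, fun t _ => ?_, fun t _ => ?_⟩
  · have := (hasDerivAt_sol η q0 (P η q0 q1) t).hasDerivWithinAt (s := Icc (0:ℝ) 1)
    simpa [XH_H0] using this
  · rw [H0_sol]; exact hen

lemma chord_eq_sol {c η : ℝ} (hη : η ≠ 0) {q0 q1 : R2} {v : ℝ → Phase}
    (h : IsChord H0 c q0 q1 η v) :
    ∀ t ∈ Icc (0:ℝ) 1, v t = sol η q0 (v 0).2 t := by
  obtain ⟨h0, h1e, hderiv, hen⟩ := h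
  have hv0 : v 0 = (q0, (v 0).2) := by rw [← h0]
  have hK : ∀ t : ℝ, LipschitzWith ‖η • Fclm‖₊ (fun x : Phase => (η • Fclm) x) :=
    fun _ => (η • Fclm).lipschitz
  have hmem : ∀ t ∈ Ico (0:ℝ) 1, Icc (0:ℝ) 1 ∈ nhdsWithin t (Ici t) := by
    intro t ht
    exact mem_nhdsWithin.mpr ⟨Iio 1, isOpen_Iio, ht.2,
      fun y hy => ⟨le_trans ht.1 hy.2, hy.1.le⟩⟩
  have key := ODE_solution_unique (v := fun _ x => (η • Fclm) x) (f := v)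
    (g := sol η q0 (v 0).2) (a := 0) (b := 1) hK
    (fun t ht => (hderiv t ht).continuousWithinAt)
    (fun t ht => by
      have := (hderiv t (Ico_subset_Icc_self ht)).mono_of_mem_nhdsWithin (hmem t ht)
      simpa [XH_H0] using this)
    (fun t _ => (hasDerivAt_sol η q0 (v 0).2 t).continuousAt.continuousWithinAt)
    (fun t ht => by
      have := (hasDerivAt_sol η q0 (v 0).2 t).hasDerivWithinAt (s := Ici t)
      simpa using this)
    (by rw [sol_zero, ← hv0])
  exact fun t ht => key ht

lemma chord_momentum {c η : ℝ} (hη : η ≠ 0) {q0 q1 : R2} {v : ℝ → Phase}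
    (h : IsChord H0 c q0 q1 η v) : (v 0).2 = P η q0 q1 ∧ ff c q0 q1 η = 0 := by
  have hsol := chord_eq_sol hη h
  obtain ⟨h0, h1e, hderiv, hen⟩ := h
  set p0 := (v 0).2 with hp0
  have hend : (sol η q0 p0 1).1 = q1 := by rw [← hsol 1 ⟨zero_le_one, le_refl 1⟩]; exact h1e
  have hend' : rot η (q0 + η • p0) = q1 := by
    simpa [sol] using hend
  have hsolve : q0 + η • p0 = rot (-η) q1 := by
    rw [← hend', rot_rot, neg_add_cancel, rot_zero]
  have hP : p0 = P η q0 q1 := by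
    have : η • p0 = rot (-η) q1 - q0 := by rw [← hsolve]; abel
    rw [P, ← this, smul_smul, inv_mul_cancel₀ hη, one_smul]
  have henergy : H0 (q0, p0) = c := by
    have := hen 0 ⟨le_refl 0, zero_le_one⟩
    rwa [show v 0 = (q0, p0) from by rw [← h0]] at this
  refine ⟨hP, ?_⟩
  rw [ff_eq_energy c q0 q1 η hη, ← hP, henergy]
  ring

lemma isChord_reflect {H : Phase → ℝ} {e : ℝ} {q0 q1 : R2} {η : ℝ} {v : ℝ → Phase}
    (h : IsChord H e q0 q1 η v) : IsChord H e q1 q0 (-η) (fun t => v (1 - t)) := by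
  obtain ⟨h0, h1e, hderiv, hen⟩ := h
  have hmaps : MapsTo (fun t : ℝ => 1 - t) (Icc 0 1) (Icc 0 1) := by
    intro t ht
    simp only [mem_Icc] at ht ⊢
    exact ⟨by linarith, by linarith⟩
  refine ⟨by simpa using h1e, by simpa using h0, fun t ht => ?_, fun t ht => hen _ (hmaps ht)⟩
  have hinner : HasDerivWithinAt (fun t : ℝ => 1 - t) (-1) (Icc 0 1) t :=
    ((hasDerivAt_const t (1:ℝ)).sub (hasDerivAt_id t)).hasDerivWithinAt.congr_deriv (by norm_num)
  have houter := hderiv (1 - t) (hmaps ht)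
  have := houter.scomp t hinner hmaps
  simp [smul_smul] at this; exact this.congr_deriv (neg_smul _ _).symm

/-- Main one-sided result: a unique positive chord. -/
lemma pos_side {c : ℝ} (hc : 0 < c) (q0 q1 : R2) (hq : q0 ≠ q1)
    (hle : enorm2 q0 * enorm2 q1 ≤ 2 * c) :
    ∃ (η : ℝ) (v : ℝ → Phase), 0 < η ∧ IsChord H0 c q0 q1 η v ∧
      ∀ (η' : ℝ) (v' : ℝ → Phase), 0 < η' → IsChord H0 c q0 q1 η' v' →
        η' = η ∧ ∀ t ∈ Icc (0:ℝ) 1, v' t = v t := by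
  obtain ⟨η, hηpos, hroot⟩ := ff_exists_root hc q0 q1 hq hle
  refine ⟨η, sol η q0 (P η q0 q1), hηpos, isChord_sol hηpos.ne' q0 q1 hroot, ?_⟩
  intro η' v' hη' hch
  obtain ⟨hP, hroot'⟩ := chord_momentum hη'.ne' hch
  have hηη : η' = η := ff_root_unique hc q0 q1 hle hη' hηpos hroot' hroot
  refine ⟨hηη, fun t ht => ?_⟩
  rw [chord_eq_sol hη'.ne' hch t ht, hP, hηη]

end Aux

/-- For `c > 0`, `q₀ ≠ q₁` and `|q₀||q₁| ≤ 2c`, there is exactly one chord pair `(v,η)` of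
`H₀` at energy `c` from `q₀` to `q₁` with `η > 0`, and exactly one with `η < 0`
(chords being identified when they agree on `[0,1]`). -/
theorem stmt14 (c : ℝ) (hc : 0 < c) (q0 q1 : R2) (hq : q0 ≠ q1)
    (hle : enorm2 q0 * enorm2 q1 ≤ 2 * c) :
    (∃ (η : ℝ) (v : ℝ → Phase), 0 < η ∧ IsChord H0 c q0 q1 η v ∧
        ∀ (η' : ℝ) (v' : ℝ → Phase), 0 < η' → IsChord H0 c q0 q1 η' v' →
          η' = η ∧ ∀ t ∈ Icc (0:ℝ) 1, v' t = v t) ∧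
      ∃ (η : ℝ) (v : ℝ → Phase), η < 0 ∧ IsChord H0 c q0 q1 η v ∧
        ∀ (η' : ℝ) (v' : ℝ → Phase), η' < 0 → IsChord H0 c q0 q1 η' v' →
          η' = η ∧ ∀ t ∈ Icc (0:ℝ) 1, v' t = v t := by
  constructor
  · exact pos_side hc q0 q1 hq hle
  · obtain ⟨η, v, hηpos, hch, huniq⟩ :=
      pos_side hc q1 q0 hq.symm (by rwa [mul_comm])
    refine ⟨-η, fun t => v (1 - t), neg_lt_zero.mpr hηpos, ?_, ?_⟩
    · have := isChord_reflect hch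
      simpa using this
    · intro η' v' hη' hch'
      have hch'' := isChord_reflect hch'
      obtain ⟨heq, hveq⟩ := huniq (-η') (fun t => v' (1 - t)) (by linarith) hch''
      refine ⟨by linarith [neg_eq_iff_eq_neg.mp heq], fun t ht => ?_⟩
      have := hveq (1 - t) ⟨by linarith [ht.2], by linarith [ht.1]⟩
      simpa using this
end

section
/- Fix c > 0 and q₀,q₁ ∈ ℝ². Let V : ℝ² → ℝ be a smooth nonnegative function for which there exist r₀ > 0 and a pair (α,a) with either α = 2 and 0 < a < c²/4, or α > 2 and a > 0, such that for all q ∈ ℝ² with |q| > r₀: V(q) ≤ a/|q|^α and ⟨∇V(q), q/|q|⟩ ≥ −a/|q|^{α+1}. Define H : ℝ²×ℝ² → ℝ by H(q,p) := H₀(q,p) − V(q). Then there exists a compact set K ⊆ ℝ²×ℝ² such that every chord (v,η) of H at energy c from q₀ to q₁ satisfies v([0,1]) ⊆ K. -/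
open Set

/- ### Auxiliary lemmas -/

lemma my_sq2_nonneg (x : R2) : 0 ≤ sq2 x := by unfold sq2; positivity

lemma my_fderiv_H_apply (V : R2 → ℝ) (hV : Differentiable ℝ V) (x w : Phase) :
    fderiv ℝ (fun y : Phase => H0 y - V y.1) x w =
      x.2.1 * w.2.1 + x.2.2 * w.2.2 + (w.2.1 * x.1.2 + x.2.1 * w.1.2)
        - (w.2.2 * x.1.1 + x.2.2 * w.1.1) - fderiv ℝ V x.1 w.1 := by
  have hq1 : HasFDerivAt (fun y : Phase => y.1.1)
      ((ContinuousLinearMap.fst ℝ ℝ ℝ).comp (ContinuousLinearMap.fst ℝ R2 R2)) x :=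
    ((ContinuousLinearMap.fst ℝ ℝ ℝ).comp (ContinuousLinearMap.fst ℝ R2 R2)).hasFDerivAt
  have hq2 : HasFDerivAt (fun y : Phase => y.1.2)
      ((ContinuousLinearMap.snd ℝ ℝ ℝ).comp (ContinuousLinearMap.fst ℝ R2 R2)) x :=
    ((ContinuousLinearMap.snd ℝ ℝ ℝ).comp (ContinuousLinearMap.fst ℝ R2 R2)).hasFDerivAt
  have hp1 : HasFDerivAt (fun y : Phase => y.2.1)
      ((ContinuousLinearMap.fst ℝ ℝ ℝ).comp (ContinuousLinearMap.snd ℝ R2 R2)) x :=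
    ((ContinuousLinearMap.fst ℝ ℝ ℝ).comp (ContinuousLinearMap.snd ℝ R2 R2)).hasFDerivAt
  have hp2 : HasFDerivAt (fun y : Phase => y.2.2)
      ((ContinuousLinearMap.snd ℝ ℝ ℝ).comp (ContinuousLinearMap.snd ℝ R2 R2)) x :=
    ((ContinuousLinearMap.snd ℝ ℝ ℝ).comp (ContinuousLinearMap.snd ℝ R2 R2)).hasFDerivAt
  have hVx : HasFDerivAt (fun y : Phase => V y.1)
      ((fderiv ℝ V x.1).comp (ContinuousLinearMap.fst ℝ R2 R2)) x :=
    (hV x.1).hasFDerivAt.comp x hasFDerivAt_fst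
  have hfun : (fun y : Phase => H0 y - V y.1) =
      fun y : Phase => ((y.2.1 * y.2.1 + y.2.2 * y.2.2) * (1/2) + y.2.1 * y.1.2 - y.2.2 * y.1.1)
        - V y.1 := by
    funext y; unfold H0; ring
  rw [hfun]
  have hd := ((((((hp1.mul hp1).add (hp2.mul hp2)).mul_const (1/2 : ℝ)).add (hp1.mul hq2)).sub
      (hp2.mul hq1)).sub hVx)
  rw [(show HasFDerivAt (fun y : Phase => ((y.2.1 * y.2.1 + y.2.2 * y.2.2) * (1/2) + y.2.1 * y.1.2 - y.2.2 * y.1.1) - V y.1) _ x from hd).fderiv]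
  simp [ContinuousLinearMap.add_apply, ContinuousLinearMap.comp_apply,
    ContinuousLinearMap.smul_apply, ContinuousLinearMap.sub_apply, smul_eq_mul]
  ring

lemma my_XH_eq (V : R2 → ℝ) (hV : Differentiable ℝ V) (x : Phase) :
    XH (fun y : Phase => H0 y - V y.1) x =
      ((x.2.1 + x.1.2, x.2.2 - x.1.1),
       (x.2.2 + fderiv ℝ V x.1 (1, 0), -x.2.1 + fderiv ℝ V x.1 (0, 1))) := by
  unfold XH
  simp only [my_fderiv_H_apply V hV]
  have h0 : (fderiv ℝ V x.1) ((0:ℝ), (0:ℝ)) = 0 := by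
    have : ((0:ℝ), (0:ℝ)) = (0 : R2) := rfl
    rw [this, map_zero]
  simp [h0]
  constructor <;> ring

lemma my_isCompact_sq2_le (m : ℝ) : IsCompact {x : R2 | sq2 x ≤ m} := by
  apply (isCompact_closedBall (0:R2) (Real.sqrt m)).of_isClosed_subset
  · have hc : Continuous sq2 := by unfold sq2; fun_prop
    exact isClosed_le hc continuous_const
  · intro x hx
    simp only [mem_setOf_eq] at hx
    have hm : 0 ≤ m := le_trans (my_sq2_nonneg x) hx
    have h1 : |x.1| ≤ Real.sqrt m := by
      rw [Real.le_sqrt (abs_nonneg _) hm, sq_abs]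
      unfold sq2 at hx; nlinarith [sq_nonneg x.2]
    have h2 : |x.2| ≤ Real.sqrt m := by
      rw [Real.le_sqrt (abs_nonneg _) hm, sq_abs]
      unfold sq2 at hx; nlinarith [sq_nonneg x.1]
    rw [Metric.mem_closedBall, Prod.dist_eq]
    have d1 : dist x.1 (0:R2).1 = |x.1| := by simp [Real.dist_eq]
    have d2 : dist x.2 (0:R2).2 = |x.2| := by simp [Real.dist_eq]
    rw [d1, d2]
    exact max_le h1 h2

lemma my_p_lower {c : ℝ} (hc : 0 < c) {q p : R2}
    (hE : c ≤ sq2 p / 2 + p.1 * q.2 - p.2 * q.1) :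
    c ^ 2 / (sq2 q + 2 * c) ≤ sq2 p := by
  set rq := Real.sqrt (sq2 q) with hrqdef
  set u := Real.sqrt (sq2 p) with hudef
  have hrq : rq ^ 2 = sq2 q := Real.sq_sqrt (my_sq2_nonneg q)
  have hu : u ^ 2 = sq2 p := Real.sq_sqrt (my_sq2_nonneg p)
  have hrq0 : 0 ≤ rq := Real.sqrt_nonneg _
  have hu0 : 0 ≤ u := Real.sqrt_nonneg _
  have hlag : (p.2 * q.1 - p.1 * q.2) ^ 2 ≤ (rq * u) ^ 2 := by
    have : (p.2 * q.1 - p.1 * q.2) ^ 2 + (p.1 * q.1 + p.2 * q.2) ^ 2 = sq2 p * sq2 q := by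
      unfold sq2; ring
    nlinarith [sq_nonneg (p.1 * q.1 + p.2 * q.2)]
  have hL : -(rq * u) ≤ p.2 * q.1 - p.1 * q.2 := by
    nlinarith [mul_nonneg hrq0 hu0]
  have hu2 : 2 * c ≤ u ^ 2 + 2 * (rq * u) := by
    nlinarith
  set s := Real.sqrt (rq ^ 2 + 2 * c) with hsdef
  have hs : s ^ 2 = rq ^ 2 + 2 * c := Real.sq_sqrt (by nlinarith)
  have hs0 : 0 ≤ s := Real.sqrt_nonneg _
  have h1 : s ≤ u + rq := by nlinarith [sq_nonneg (u + rq - s)]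
  have h2 : rq * s ≤ rq ^ 2 + c := by nlinarith [sq_nonneg (rq * s - rq^2 - c)]
  have h3 : c ≤ u * s := by nlinarith
  rw [div_le_iff₀ (by nlinarith : (0:ℝ) < sq2 q + 2 * c)]
  have : sq2 q + 2 * c = s ^ 2 := by rw [hs, hrq]
  rw [this, ← hu]
  nlinarith [h3, mul_nonneg hu0 hs0]

lemma my_p_upper {m cc : ℝ} (hm : 0 ≤ m) (hcc : 0 ≤ cc) {q p : R2}
    (hq : sq2 q ≤ m)
    (hE : sq2 p / 2 + p.1 * q.2 - p.2 * q.1 ≤ cc) :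
    sq2 p ≤ (Real.sqrt m + Real.sqrt (m + 2 * cc)) ^ 2 := by
  set s := Real.sqrt m with hsdef
  set b := Real.sqrt (m + 2 * cc) with hbdef
  set u := Real.sqrt (sq2 p) with hudef
  have hs : s ^ 2 = m := Real.sq_sqrt hm
  have hb : b ^ 2 = m + 2 * cc := Real.sq_sqrt (by linarith)
  have hu : u ^ 2 = sq2 p := Real.sq_sqrt (my_sq2_nonneg p)
  have hs0 : 0 ≤ s := Real.sqrt_nonneg _
  have hb0 : 0 ≤ b := Real.sqrt_nonneg _
  have hu0 : 0 ≤ u := Real.sqrt_nonneg _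
  set rq := Real.sqrt (sq2 q) with hrqdef
  have hrq : rq ^ 2 = sq2 q := Real.sq_sqrt (my_sq2_nonneg q)
  have hrq0 : 0 ≤ rq := Real.sqrt_nonneg _
  have hrqs : rq ≤ s := by nlinarith
  have hlag : (p.2 * q.1 - p.1 * q.2) ^ 2 ≤ (rq * u) ^ 2 := by
    have : (p.2 * q.1 - p.1 * q.2) ^ 2 + (p.1 * q.1 + p.2 * q.2) ^ 2 = sq2 p * sq2 q := by
      unfold sq2; ring
    nlinarith [sq_nonneg (p.1 * q.1 + p.2 * q.2)]
  have hL : p.2 * q.1 - p.1 * q.2 ≤ rq * u := by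
    nlinarith [mul_nonneg hrq0 hu0]
  have hu2 : u ^ 2 ≤ 2 * cc + 2 * (s * u) := by
    have : rq * u ≤ s * u := mul_le_mul_of_nonneg_right hrqs hu0
    nlinarith
  have h1 : u ≤ s + b := by nlinarith [sq_nonneg (u - s - b), sq_nonneg (u - s + b)]
  nlinarith

lemma my_exists_R1 {c a α r0 : ℝ} (hc : 0 < c) (hr0 : 0 < r0)
    (hαa : (α = 2 ∧ 0 < a ∧ a < c ^ 2 / 4) ∨ (2 < α ∧ 0 < a)) :
    ∃ R1 : ℝ, r0 ≤ R1 ∧ 1 ≤ R1 ∧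
      ∀ r : ℝ, R1 < r → a / r ^ α ≤ c ^ 2 / (r * r + 2 * c) := by
  rcases hαa with ⟨hα, ha, hac⟩ | ⟨hα, ha⟩
  · refine ⟨max (max r0 1) (Real.sqrt (2 * a * c / (c ^ 2 - a))), ?_, ?_, ?_⟩
    · exact le_trans (le_max_left _ _) (le_max_left _ _)
    · exact le_trans (le_max_right _ _) (le_max_left _ _)
    · intro r hr
      have hca : 0 < c ^ 2 - a := by nlinarith
      have hr1 : (1:ℝ) < r := lt_of_le_of_lt (le_trans (le_max_right _ _) (le_max_left _ _)) hr
      have hrpos : 0 < r := by linarith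
      have hB : 0 ≤ 2 * a * c / (c ^ 2 - a) := by positivity
      have hsq : Real.sqrt (2 * a * c / (c ^ 2 - a)) ^ 2 = 2 * a * c / (c ^ 2 - a) :=
        Real.sq_sqrt hB
      have hsr : Real.sqrt (2 * a * c / (c ^ 2 - a)) < r :=
        lt_of_le_of_lt (le_max_right _ _) hr
      have hs0 : 0 ≤ Real.sqrt (2 * a * c / (c ^ 2 - a)) := Real.sqrt_nonneg _
      have hr2 : 2 * a * c / (c ^ 2 - a) < r ^ 2 := by nlinarith
      have hmul : 2 * a * c < r ^ 2 * (c ^ 2 - a) := by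
        rw [div_lt_iff₀ hca] at hr2; linarith
      have hrα : r ^ α = r * r := by
        rw [hα, show ((2:ℝ) = ((2:ℕ):ℝ)) by norm_num, Real.rpow_natCast]; ring
      rw [hrα, div_le_div_iff₀ (by positivity) (by positivity)]
      nlinarith
  · refine ⟨max (max r0 1) (((a + 2 * a * c) / c ^ 2) ^ (α - 2)⁻¹), ?_, ?_, ?_⟩
    · exact le_trans (le_max_left _ _) (le_max_left _ _)
    · exact le_trans (le_max_right _ _) (le_max_left _ _)
    · intro r hr
      have hr1 : (1:ℝ) < r := lt_of_le_of_lt (le_trans (le_max_right _ _) (le_max_left _ _)) hr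
      have hrpos : 0 < r := by linarith
      have hB : 0 ≤ (a + 2 * a * c) / c ^ 2 := by positivity
      have hα2 : (0:ℝ) < α - 2 := by linarith
      have hXr : ((a + 2 * a * c) / c ^ 2) ^ (α - 2)⁻¹ ≤ r :=
        le_of_lt (lt_of_le_of_lt (le_max_right _ _) hr)
      have h1 : (a + 2 * a * c) / c ^ 2 ≤ r ^ (α - 2) := by
        calc (a + 2 * a * c) / c ^ 2
            = (((a + 2 * a * c) / c ^ 2) ^ (α - 2)⁻¹) ^ (α - 2) :=
              (Real.rpow_inv_rpow hB (ne_of_gt hα2)).symm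
          _ ≤ r ^ (α - 2) := Real.rpow_le_rpow (Real.rpow_nonneg hB _) hXr (le_of_lt hα2)
      have h2 : a + 2 * a * c ≤ c ^ 2 * r ^ (α - 2) := by
        rw [div_le_iff₀ (by positivity)] at h1; linarith
      have hrα : r ^ α = r ^ (α - 2) * (r * r) := by
        have h3 : r ^ α = r ^ (α - 2) * r ^ (2:ℝ) := by
          rw [← Real.rpow_add hrpos]; ring_nf
        rw [h3, show ((2:ℝ) = ((2:ℕ):ℝ)) by norm_num, Real.rpow_natCast]; ring
      have hrapos : 0 < r ^ (α - 2) := Real.rpow_pos_of_pos hrpos _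
      rw [div_le_div_iff₀ (by rw [hrα]; positivity) (by positivity), hrα]
      have hrr : 1 ≤ r * r := by nlinarith
      nlinarith [mul_le_mul_of_nonneg_right h2 (le_of_lt (by nlinarith : (0:ℝ) < r * r)),
        mul_nonneg (mul_pos ha hc).le (by linarith : (0:ℝ) ≤ r * r - 1)]

/-- For a smooth nonnegative potential `V` with the decay conditions
`V ≤ a/r^α` and `∂V/∂r ≥ −a/r^{α+1}` for `r > r₀` (with `α = 2, 0 < a < c²/4` or
`α > 2, a > 0`), all chords of `H = H₀ − V` at energy `c > 0` from `q₀` to `q₁` are contained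
in a fixed compact subset of `ℝ²×ℝ²`. -/
theorem stmt18 (c : ℝ) (hc : 0 < c) (q0 q1 : R2)
    (V : R2 → ℝ) (hVsm : ContDiff ℝ (⊤ : ℕ∞) V) (hVnn : ∀ q, 0 ≤ V q)
    (r0 α a : ℝ) (hr0 : 0 < r0)
    (hαa : (α = 2 ∧ 0 < a ∧ a < c ^ 2 / 4) ∨ (2 < α ∧ 0 < a))
    (hdecay : ∀ q : R2, r0 < enorm2 q →
      V q ≤ a / enorm2 q ^ α ∧
        -(a / enorm2 q ^ (α + 1)) ≤ fderiv ℝ V q q / enorm2 q) :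
    ∃ K : Set Phase, IsCompact K ∧
      ∀ (η : ℝ) (v : ℝ → Phase), IsChord (fun x => H0 x - V x.1) c q0 q1 η v →
        ∀ t ∈ Icc (0:ℝ) 1, v t ∈ K := by
  have hVd : Differentiable ℝ V := hVsm.differentiable (by simp)
  obtain ⟨R1, hR1r0, hR11, hR1⟩ := my_exists_R1 hc hr0 hαa
  set M := max (max (sq2 q0) (sq2 q1)) (R1 * R1) with hMdef
  have hM0 : 0 ≤ M := le_trans (my_sq2_nonneg q0) (le_trans (le_max_left _ _) (le_max_left _ _))
  obtain ⟨x0, hx0S, hx0max⟩ := (my_isCompact_sq2_le M).exists_isMaxOn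
    ⟨((0:ℝ),(0:ℝ)), by simpa [sq2] using hM0⟩ (hVsm.continuous.continuousOn)
  set C := V x0 with hCdef
  have hC0 : 0 ≤ C := hVnn x0
  have hC : ∀ q : R2, sq2 q ≤ M → V q ≤ C := fun q hq => hx0max hq
  set P := (Real.sqrt M + Real.sqrt (M + 2 * (c + C))) ^ 2 with hPdef
  refine ⟨{x : R2 | sq2 x ≤ M} ×ˢ {y : R2 | sq2 y ≤ P},
    (my_isCompact_sq2_le M).prod (my_isCompact_sq2_le P), ?_⟩
  intro η v hch
  obtain ⟨hv0, hv1, hvd, hE⟩ := hch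
  have hEn : ∀ t ∈ Icc (0:ℝ) 1,
      sq2 (v t).2 / 2 + (v t).2.1 * (v t).1.2 - (v t).2.2 * (v t).1.1 = c + V (v t).1 := by
    intro t ht
    have h := hE t ht
    simp only [H0] at h
    unfold sq2
    linarith
  set ρ : ℝ → ℝ := fun s => sq2 (v s).1 with hρdef
  set φ : ℝ → ℝ := fun s => (v s).1.1 * (v s).2.1 + (v s).1.2 * (v s).2.2 with hφdef
  have hXHval : ∀ s ∈ Icc (0:ℝ) 1, η • XH (fun x : Phase => H0 x - V x.1) (v s) =
      ((η * ((v s).2.1 + (v s).1.2), η * ((v s).2.2 - (v s).1.1)),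
       (η * ((v s).2.2 + fderiv ℝ V (v s).1 (1, 0)),
        η * (-(v s).2.1 + fderiv ℝ V (v s).1 (0, 1)))) := by
    intro s _
    rw [my_XH_eq V hVd]
    simp [Prod.smul_mk, smul_eq_mul]
  have hq1' : ∀ s ∈ Icc (0:ℝ) 1, HasDerivWithinAt (fun u => (v u).1.1)
      (η * ((v s).2.1 + (v s).1.2)) (Icc (0:ℝ) 1) s := by
    intro s hs
    have h := ((ContinuousLinearMap.fst ℝ ℝ ℝ).comp
      (ContinuousLinearMap.fst ℝ R2 R2)).hasFDerivAt.comp_hasDerivWithinAt s (hvd s hs)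
    rw [hXHval s hs] at h
    exact h
  have hq2' : ∀ s ∈ Icc (0:ℝ) 1, HasDerivWithinAt (fun u => (v u).1.2)
      (η * ((v s).2.2 - (v s).1.1)) (Icc (0:ℝ) 1) s := by
    intro s hs
    have h := ((ContinuousLinearMap.snd ℝ ℝ ℝ).comp
      (ContinuousLinearMap.fst ℝ R2 R2)).hasFDerivAt.comp_hasDerivWithinAt s (hvd s hs)
    rw [hXHval s hs] at h
    exact h
  have hp1' : ∀ s ∈ Icc (0:ℝ) 1, HasDerivWithinAt (fun u => (v u).2.1)
      (η * ((v s).2.2 + fderiv ℝ V (v s).1 (1, 0))) (Icc (0:ℝ) 1) s := by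
    intro s hs
    have h := ((ContinuousLinearMap.fst ℝ ℝ ℝ).comp
      (ContinuousLinearMap.snd ℝ R2 R2)).hasFDerivAt.comp_hasDerivWithinAt s (hvd s hs)
    rw [hXHval s hs] at h
    exact h
  have hp2' : ∀ s ∈ Icc (0:ℝ) 1, HasDerivWithinAt (fun u => (v u).2.2)
      (η * (-(v s).2.1 + fderiv ℝ V (v s).1 (0, 1))) (Icc (0:ℝ) 1) s := by
    intro s hs
    have h := ((ContinuousLinearMap.snd ℝ ℝ ℝ).comp
      (ContinuousLinearMap.snd ℝ R2 R2)).hasFDerivAt.comp_hasDerivWithinAt s (hvd s hs)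
    rw [hXHval s hs] at h
    exact h
  have hρ' : ∀ s ∈ Icc (0:ℝ) 1, HasDerivWithinAt ρ (2 * η * φ s) (Icc (0:ℝ) 1) s := by
    intro s hs
    have h := ((hq1' s hs).mul (hq1' s hs)).add ((hq2' s hs).mul (hq2' s hs))
    have heq : ρ = fun u => (v u).1.1 * (v u).1.1 + (v u).1.2 * (v u).1.2 := by
      funext u; simp only [hρdef]; unfold sq2; ring
    rw [heq]
    refine h.congr_deriv ?_
    simp only [hφdef]; ring
  have hfq : ∀ s : ℝ, fderiv ℝ V (v s).1 ((v s).1) =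
      (v s).1.1 * fderiv ℝ V (v s).1 (1, 0) + (v s).1.2 * fderiv ℝ V (v s).1 (0, 1) := by
    intro s
    have hsplit : ((v s).1 : R2) = (v s).1.1 • ((1:ℝ), (0:ℝ)) + (v s).1.2 • ((0:ℝ), (1:ℝ)) := by
      ext <;> simp
    calc fderiv ℝ V (v s).1 ((v s).1)
        = fderiv ℝ V (v s).1 ((v s).1.1 • ((1:ℝ), (0:ℝ)) + (v s).1.2 • ((0:ℝ), (1:ℝ))) := by
          rw [← hsplit]
      _ = (v s).1.1 * fderiv ℝ V (v s).1 (1, 0) + (v s).1.2 * fderiv ℝ V (v s).1 (0, 1) := by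
          rw [map_add, map_smul, map_smul, smul_eq_mul, smul_eq_mul]
  have hφ' : ∀ s ∈ Icc (0:ℝ) 1, HasDerivWithinAt φ
      (η * (sq2 (v s).2 + fderiv ℝ V (v s).1 ((v s).1))) (Icc (0:ℝ) 1) s := by
    intro s hs
    have h := ((hq1' s hs).mul (hp1' s hs)).add ((hq2' s hs).mul (hp2' s hs))
    have heq : φ = fun u => (v u).1.1 * (v u).2.1 + (v u).1.2 * (v u).2.2 := rfl
    rw [heq]
    refine h.congr_deriv ?_
    rw [hfq s]
    unfold sq2; ring
  have hρc : ContinuousOn ρ (Icc (0:ℝ) 1) := fun s hs => (hρ' s hs).continuousWithinAt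
  have hkey : ∀ s ∈ Icc (0:ℝ) 1, M < ρ s →
      0 ≤ sq2 (v s).2 + fderiv ℝ V (v s).1 ((v s).1) := by
    intro s hs hMs
    have hMs' : M < sq2 (v s).1 := hMs
    have hqgt : R1 * R1 < sq2 (v s).1 :=
      lt_of_le_of_lt (le_max_right _ _) hMs'
    have hR10 : (0:ℝ) ≤ R1 := by linarith
    have hepos : R1 < enorm2 (v s).1 := by
      unfold enorm2
      rw [show R1 = Real.sqrt (R1 * R1) from (Real.sqrt_mul_self hR10).symm]
      exact Real.sqrt_lt_sqrt (by positivity) hqgt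
    have he0 : 0 < enorm2 (v s).1 := lt_of_lt_of_le (by linarith) hepos.le
    obtain ⟨hVb, hVr⟩ := hdecay (v s).1 (lt_of_le_of_lt hR1r0 hepos)
    have hee : enorm2 (v s).1 * enorm2 (v s).1 = sq2 (v s).1 :=
      Real.mul_self_sqrt (my_sq2_nonneg _)
    have hfd : -(a / enorm2 (v s).1 ^ α) ≤ fderiv ℝ V (v s).1 ((v s).1) := by
      have h1 := (le_div_iff₀ he0).mp hVr
      have h2 : enorm2 (v s).1 ^ (α + 1) = enorm2 (v s).1 ^ α * enorm2 (v s).1 := by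
        rw [Real.rpow_add he0, Real.rpow_one]
      have h3 : -(a / enorm2 (v s).1 ^ (α + 1)) * enorm2 (v s).1
          = -(a / enorm2 (v s).1 ^ α) := by
        rw [h2]
        have hαpos : (0:ℝ) < enorm2 (v s).1 ^ α := Real.rpow_pos_of_pos he0 α
        field_simp
      linarith [h1, h3.symm.le]
    have hElow : c ≤ sq2 (v s).2 / 2 + (v s).2.1 * (v s).1.2 - (v s).2.2 * (v s).1.1 := by
      have h4 := hEn s hs
      have h5 := hVnn (v s).1
      linarith
    have hlow : c ^ 2 / (sq2 (v s).1 + 2 * c) ≤ sq2 (v s).2 := my_p_lower hc hElow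
    have hup : a / enorm2 (v s).1 ^ α ≤ c ^ 2 / (sq2 (v s).1 + 2 * c) := by
      have h := hR1 (enorm2 (v s).1) hepos
      rw [hee] at h
      exact h
    linarith
  have hqbound : ∀ s ∈ Icc (0:ℝ) 1, ρ s ≤ M := by
    by_contra hcon
    push_neg at hcon
    obtain ⟨w, hw, hMw⟩ := hcon
    have hρ0 : ρ 0 ≤ M := by
      show sq2 (v 0).1 ≤ M
      rw [hv0]
      exact le_trans (le_max_left _ _) (le_max_left _ _)
    have hρ1 : ρ 1 ≤ M := by
      show sq2 (v 1).1 ≤ M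
      rw [hv1]
      exact le_trans (le_max_right _ _) (le_max_left _ _)
    have hw0 : 0 ≤ w := hw.1
    have hw1 : w ≤ 1 := hw.2
    set A := Icc (0:ℝ) w ∩ ρ ⁻¹' (Iic M) with hA
    have hAclosed : IsClosed A :=
      (hρc.mono (Icc_subset_Icc le_rfl hw1)).preimage_isClosed_of_isClosed
        isClosed_Icc isClosed_Iic
    have hAcomp : IsCompact A := isCompact_Icc.of_isClosed_subset hAclosed inter_subset_left
    have hAne : A.Nonempty := ⟨0, ⟨⟨le_rfl, hw0⟩, hρ0⟩⟩
    set t1 := sSup A with ht1def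
    have ht1A : t1 ∈ A := hAcomp.sSup_mem hAne
    have ht1w : t1 < w := by
      rcases lt_or_eq_of_le ht1A.1.2 with h | h
      · exact h
      · exact absurd (h ▸ ht1A.2 : ρ w ≤ M) (not_le.mpr hMw)
    set B := Icc w 1 ∩ ρ ⁻¹' (Iic M) with hB
    have hBclosed : IsClosed B :=
      (hρc.mono (Icc_subset_Icc hw0 le_rfl)).preimage_isClosed_of_isClosed
        isClosed_Icc isClosed_Iic
    have hBcomp : IsCompact B := by
      apply IsCompact.of_isClosed_subset (isCompact_Icc (a := w) (b := 1)) hBclosed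
        inter_subset_left
    have hBne : B.Nonempty := ⟨1, ⟨⟨hw1, le_rfl⟩, hρ1⟩⟩
    set t2 := sInf B with ht2def
    have ht2B : t2 ∈ B := hBcomp.sInf_mem hBne
    have hwt2 : w < t2 := by
      rcases lt_or_eq_of_le ht2B.1.1 with h | h
      · exact h
      · exact absurd (h ▸ ht2B.2 : ρ w ≤ M) (not_le.mpr hMw)
    have ht10 : 0 ≤ t1 := ht1A.1.1
    have ht21 : t2 ≤ 1 := ht2B.1.2
    have hmid : ∀ s, t1 < s → s < t2 → M < ρ s := by
      intro s h1 h2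
      rcases le_or_gt s w with hsw | hws
      · by_contra hle
        push_neg at hle
        have hmem : s ∈ A := ⟨⟨le_trans ht10 h1.le, hsw⟩, hle⟩
        exact absurd (le_csSup hAcomp.bddAbove hmem) (not_le.mpr h1)
      · by_contra hle
        push_neg at hle
        have hmem : s ∈ B := ⟨⟨hws.le, le_trans h2.le ht21⟩, hle⟩
        exact absurd (csInf_le hBcomp.bddBelow hmem) (not_le.mpr h2)
    set g : ℝ → ℝ := fun s => 2 * η * φ s with hgdef
    have hρder : ∀ s ∈ Ioo (0:ℝ) 1, HasDerivAt ρ (g s) s := fun s hs =>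
      (hρ' s (Ioo_subset_Icc_self hs)).hasDerivAt (Icc_mem_nhds hs.1 hs.2)
    have hder : ∀ s ∈ Ioo t1 t2, HasDerivAt g
        (2 * η * (η * (sq2 (v s).2 + fderiv ℝ V (v s).1 ((v s).1)))) s := by
      intro s hs
      have hs01 : s ∈ Ioo (0:ℝ) 1 := ⟨lt_of_le_of_lt ht10 hs.1, lt_of_lt_of_le hs.2 ht21⟩
      exact ((hφ' s (Ioo_subset_Icc_self hs01)).const_mul (2 * η)).hasDerivAt
        (Icc_mem_nhds hs01.1 hs01.2)
    have ht1t2 : t1 ≤ t2 := by linarith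
    have hIccsub : Icc t1 t2 ⊆ Icc (0:ℝ) 1 := Icc_subset_Icc ht10 ht21
    have hmono : MonotoneOn g (Icc t1 t2) := by
      apply monotoneOn_of_deriv_nonneg (convex_Icc t1 t2)
      · intro s hs
        exact (((hφ' s (hIccsub hs)).const_mul (2 * η)).continuousWithinAt).mono hIccsub
      · rw [interior_Icc]
        intro s hs
        exact (hder s hs).differentiableAt.differentiableWithinAt
      · rw [interior_Icc]
        intro s hs
        rw [(hder s hs).deriv]
        have hs01 : s ∈ Icc (0:ℝ) 1 :=
          ⟨le_of_lt (lt_of_le_of_lt ht10 hs.1), le_of_lt (lt_of_lt_of_le hs.2 ht21)⟩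
        have hX := hkey s hs01 (hmid s hs.1 hs.2)
        nlinarith [sq_nonneg η]
    obtain ⟨s1, hs1, hgs1⟩ := exists_hasDerivAt_eq_slope ρ g ht1w
      (hρc.mono (Icc_subset_Icc ht10 hw1))
      (fun s hs => hρder s ⟨lt_of_le_of_lt ht10 hs.1, lt_of_lt_of_le hs.2 hw1⟩)
    obtain ⟨s2, hs2, hgs2⟩ := exists_hasDerivAt_eq_slope ρ g hwt2
      (hρc.mono (Icc_subset_Icc hw0 ht21))
      (fun s hs => hρder s ⟨lt_of_le_of_lt hw0 hs.1, lt_of_lt_of_le hs.2 ht21⟩)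
    have hg1pos : 0 < g s1 := by
      rw [hgs1]
      apply div_pos
      · have h6 : ρ t1 ≤ M := ht1A.2
        linarith
      · linarith [ht1w]
    have hg2neg : g s2 < 0 := by
      rw [hgs2]
      apply div_neg_of_neg_of_pos
      · have h7 : ρ t2 ≤ M := ht2B.2
        linarith
      · linarith [hwt2]
    have hle : g s1 ≤ g s2 := by
      apply hmono
      · exact ⟨hs1.1.le, le_trans hs1.2.le (by linarith)⟩
      · exact ⟨le_trans (by linarith : t1 ≤ w) hs2.1.le, hs2.2.le⟩
      · linarith [hs1.2, hs2.1]
    linarith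
  intro t ht
  have hq := hqbound t ht
  have hq' : sq2 (v t).1 ≤ M := hq
  have hVle := hC _ hq'
  have hEt := hEn t ht
  have hpup : sq2 (v t).2 ≤ P := by
    rw [hPdef]
    exact my_p_upper hM0 (by linarith : (0:ℝ) ≤ c + C) hq'
      (by linarith : sq2 (v t).2 / 2 + (v t).2.1 * (v t).1.2 - (v t).2.2 * (v t).1.1 ≤ c + C)
  exact ⟨hq', hpup⟩
end
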